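/- For a radix sort tree s, the PATRICIA contraction Φ(s) has the same number of out-degree-2 vertices as s and the same number of leaves as s. -/

import Mathlib

/-!
`Φ(s)` is the image of the vertices of out-degree 0 or 2 under the address map `contract s`,
which keeps only the letters read just below branch vertices. The address map is monotone for
the prefix order, and two incomparable vertices fork at a branch vertex, so their addresses
are incomparable too; hence the map is injective on the surviving vertices. Each child of a
branch vertex `v` has a surviving descendant with address `contract s v ++ [b]`, which makes
`contract s v` a branch vertex of `Φ(s)`, while the address of a leaf has no proper extension in
`Φ(s)`. So leaves and branch vertices correspond bijectively.
-/

/-- A set of finite binary words is prefix-closed. -/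
def PrefixClosed (t : Set (List Bool)) : Prop :=
  ∀ v ∈ t, ∀ u : List Bool, u <+: v → u ∈ t

/-- `v` is a leaf of the finite tree `t`: it belongs to `t` and has no proper extension in `t`. -/
def IsTreeLeaf (t : Finset (List Bool)) (v : List Bool) : Prop :=
  v ∈ t ∧ ∀ w ∈ t, v <+: w → w = v

/-- The number of leaves of a finite tree. -/
def leafCount (t : Finset (List Bool)) : ℕ :=
  (t.filter fun v => ∀ w ∈ t, v <+: w → w = v).card

/-- A full binary tree: nonempty, prefix-closed, and every non-leaf vertex has both children. -/
def FullBinTree (t : Finset (List Bool)) : Prop :=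
  t.Nonempty ∧ PrefixClosed ↑t ∧
    ∀ v ∈ t, (v ++ [false] ∈ t ∨ v ++ [true] ∈ t) →
      (v ++ [false] ∈ t ∧ v ++ [true] ∈ t)
/-- The class of radix sort trees: either the trivial tree `{∅}` or a nonempty,
prefix-closed finite binary tree with at least two leaves in which the sibling of
every leaf is also a vertex. -/
def RadixTree (s : Finset (List Bool)) : Prop :=
  s.Nonempty ∧ PrefixClosed ↑s ∧
    (s = {([] : List Bool)} ∨
      (2 ≤ leafCount s ∧ ∀ v ∈ s, IsTreeLeaf s v →
        ∀ (u : List Bool) (b : Bool), v = u ++ [b] → u ++ [!b] ∈ s))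

/-- The PATRICIA address of a vertex `v` of `s`: the word recording, for every strict
ancestor of `v` that has out-degree 2 in `s`, the next letter of `v` after it.  This
realizes the deletion of all out-degree-1 vertices. -/
def contract (s : Finset (List Bool)) (v : List Bool) : List Bool :=
  (List.range v.length).filterMap fun k =>
    if (v.take k ++ [false]) ∈ s ∧ (v.take k ++ [true]) ∈ s then v[k]? else none

/-- The PATRICIA contraction `Φ` of a tree `s`: the image under `contract s` of the
vertices of `s` of out-degree 0 or 2. -/
def patricia (s : Finset (List Bool)) : Finset (List Bool) :=
  (s.filter fun v =>
      (∀ w ∈ s, v <+: w → w = v) ∨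
        ((v ++ [false]) ∈ s ∧ (v ++ [true]) ∈ s)).image (contract s)

/-- The number of out-degree-2 vertices of a finite tree. -/
def branchCount (s : Finset (List Bool)) : ℕ :=
  (s.filter fun v => (v ++ [false]) ∈ s ∧ (v ++ [true]) ∈ s).card

abbrev IsBranchVertex (s : Finset (List Bool)) (v : List Bool) : Prop :=
  v ++ [false] ∈ s ∧ v ++ [true] ∈ s

abbrev IsTerminal (s : Finset (List Bool)) (v : List Bool) : Prop :=
  ∀ w ∈ s, v <+: w → w = v

def keptVertices (s : Finset (List Bool)) : Finset (List Bool) :=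
  s.filter fun v => IsTerminal s v ∨ IsBranchVertex s v

theorem mem_keptVertices {s : Finset (List Bool)} {v : List Bool} :
    v ∈ keptVertices s ↔ v ∈ s ∧ (IsTerminal s v ∨ IsBranchVertex s v) :=
  Finset.mem_filter

theorem patricia_eq_image_keptVertices (s : Finset (List Bool)) :
    patricia s = (keptVertices s).image (contract s) := rfl

theorem List.exists_fork_of_not_prefix {α : Type*} :
    ∀ {v w : List α}, ¬ v <+: w → ¬ w <+: v →
      ∃ u a b, a ≠ b ∧ u ++ [a] <+: v ∧ u ++ [b] <+: w
  | [], _, hvw, _ => absurd List.nil_prefix hvw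
  | _, [], _, hwv => absurd List.nil_prefix hwv
  | a :: v, c :: w, hvw, hwv => by
    by_cases hac : a = c
    · subst hac
      simp only [List.cons_prefix_cons, true_and] at hvw hwv
      obtain ⟨u, b, d, hbd, hv, hw⟩ := exists_fork_of_not_prefix hvw hwv
      exact ⟨a :: u, b, d, hbd, by simpa using hv, by simpa using hw⟩
    · exact ⟨[], a, c, hac, ⟨v, rfl⟩, ⟨w, rfl⟩⟩

theorem contract_concat (s : Finset (List Bool)) (v : List Bool) (b : Bool) :
    contract s (v ++ [b]) = contract s v ++ if IsBranchVertex s v then [b] else [] := by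
  have hprefix : ∀ k ∈ List.range v.length,
      (if (v ++ [b]).take k ++ [false] ∈ s ∧ (v ++ [b]).take k ++ [true] ∈ s
        then (v ++ [b])[k]? else none) =
      if v.take k ++ [false] ∈ s ∧ v.take k ++ [true] ∈ s then v[k]? else none := by
    intro k hk
    have hk : k < v.length := List.mem_range.mp hk
    rw [List.take_append_of_le_length hk.le, List.getElem?_append_left hk]
  unfold contract
  rw [List.length_append, List.length_singleton, List.range_succ, List.filterMap_append,
    List.filterMap_congr hprefix]
  split_ifs with h <;> simp [h]

theorem contract_mono (s : Finset (List Bool)) {v w : List Bool} (h : v <+: w) :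
    contract s v <+: contract s w := by
  obtain ⟨t, rfl⟩ := h
  induction t using List.reverseRecOn with
  | nil => simp
  | append_singleton t b ih =>
    rw [← List.append_assoc, contract_concat]
    exact ih.trans (List.prefix_append _ _)

theorem concat_prefix_contract_of_isBranchVertex {s : Finset (List Bool)} {u v : List Bool}
    {b : Bool} (hu : IsBranchVertex s u) (huv : u ++ [b] <+: v) :
    contract s u ++ [b] <+: contract s v := by
  have h := contract_mono s huv
  rwa [contract_concat, if_pos hu] at h

theorem not_contract_prefix_of_not_prefix {s : Finset (List Bool)} (hs : PrefixClosed ↑s)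
    {v w : List Bool} (hv : v ∈ s) (hw : w ∈ s) (hvw : ¬ v <+: w) (hwv : ¬ w <+: v) :
    ¬ contract s v <+: contract s w := by
  obtain ⟨u, b, c, hbc, hubv, hubw⟩ := List.exists_fork_of_not_prefix hvw hwv
  have hu : IsBranchVertex s u := by
    have h₁ : u ++ [b] ∈ s := hs _ hv _ hubv
    have h₂ : u ++ [c] ∈ s := hs _ hw _ hubw
    cases b <;> cases c <;> simp_all [IsBranchVertex]
  intro hcontract
  have hv' := (concat_prefix_contract_of_isBranchVertex hu hubv).trans hcontract
  have hw' := concat_prefix_contract_of_isBranchVertex hu hubw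
  have := (List.prefix_of_prefix_length_le hv' hw' (by simp)).eq_of_length (by simp)
  simp_all

theorem contract_eq_of_isTerminal {s : Finset (List Bool)} (hs : PrefixClosed ↑s)
    {v w : List Bool} (hv : v ∈ s) (hvt : IsTerminal s v) (hw : w ∈ s)
    (h : contract s v <+: contract s w) : contract s w = contract s v := by
  by_cases hvw : v <+: w
  · rw [hvt w hw hvw]
  by_cases hwv : w <+: v
  · have hwv' := contract_mono s hwv
    exact hwv'.eq_of_length (le_antisymm hwv'.length_le h.length_le)
  · exact absurd h (not_contract_prefix_of_not_prefix hs hv hw hvw hwv)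

theorem eq_of_prefix_of_contract_eq {s : Finset (List Bool)} {v w : List Bool}
    (hv : IsTerminal s v ∨ IsBranchVertex s v) (hw : w ∈ s) (hvw : v <+: w)
    (h : contract s v = contract s w) : v = w := by
  obtain ⟨_ | ⟨b, t⟩, rfl⟩ := hvw
  · simp
  rcases hv with hvt | hvb
  · exact (hvt _ hw ⟨b :: t, rfl⟩).symm
  · have hb : contract s v ++ [b] <+: contract s (v ++ b :: t) :=
      concat_prefix_contract_of_isBranchVertex hvb ⟨t, by simp⟩
    have := hb.length_le
    simp [← h] at this

theorem contract_injOn_keptVertices {s : Finset (List Bool)} (hs : PrefixClosed ↑s) :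
    Set.InjOn (contract s) (keptVertices s) := by
  intro v hv w hw h
  rw [Finset.mem_coe, mem_keptVertices] at hv hw
  by_cases hvw : v <+: w
  · exact eq_of_prefix_of_contract_eq hv.2 hw.1 hvw h
  by_cases hwv : w <+: v
  · exact (eq_of_prefix_of_contract_eq hw.2 hv.1 hwv h.symm).symm
  · exact absurd (h ▸ List.prefix_refl _)
      (not_contract_prefix_of_not_prefix hs hv.1 hw.1 hvw hwv)

/-- A longest extension of `v` with the same address survives: a vertex of out-degree 1 has a
child with the same address. -/
theorem exists_mem_keptVertices_contract_eq {s : Finset (List Bool)} (hs : PrefixClosed ↑s)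
    {v : List Bool} (hv : v ∈ s) : ∃ w ∈ keptVertices s, contract s w = contract s v := by
  obtain ⟨w, hw, hwmax⟩ := Finset.exists_max_image
    (s.filter fun w => v <+: w ∧ contract s w = contract s v) List.length ⟨v, by simp [hv]⟩
  simp only [Finset.mem_filter] at hw hwmax
  refine ⟨w, mem_keptVertices.mpr ⟨hw.1, or_iff_not_imp_right.mpr fun hwb w' hw' hww' => ?_⟩,
    hw.2.2⟩
  by_contra hne
  obtain ⟨_ | ⟨b, t⟩, rfl⟩ := hww'
  · simp at hne
  have hchild : w ++ [b] ∈ s := hs _ hw' _ ⟨t, by simp⟩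
  have := hwmax (w ++ [b]) ⟨hchild, hw.2.1.trans (List.prefix_append _ _),
    by simp [contract_concat, hwb, hw.2.2]⟩
  simp at this

theorem concat_mem_patricia {s : Finset (List Bool)} (hs : PrefixClosed ↑s) {v : List Bool}
    (hv : IsBranchVertex s v) (b : Bool) : contract s v ++ [b] ∈ patricia s := by
  have hchild : v ++ [b] ∈ s := by cases b; exacts [hv.1, hv.2]
  obtain ⟨w, hw, hwv⟩ := exists_mem_keptVertices_contract_eq hs hchild
  exact Finset.mem_image.mpr ⟨w, hw, by simp [hwv, contract_concat, hv]⟩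

theorem isBranchVertex_patricia_contract_iff {s : Finset (List Bool)} (hs : PrefixClosed ↑s)
    {v : List Bool} (hv : v ∈ keptVertices s) :
    IsBranchVertex (patricia s) (contract s v) ↔ IsBranchVertex s v := by
  refine ⟨fun h => ?_, fun hb =>
    ⟨concat_mem_patricia hs hb false, concat_mem_patricia hs hb true⟩⟩
  obtain ⟨hvs, hvt | hvb⟩ := mem_keptVertices.mp hv
  · obtain ⟨w, hw, hwv⟩ := Finset.mem_image.mp h.1
    have := contract_eq_of_isTerminal hs hvs hvt (mem_keptVertices.mp hw).1
      (hwv ▸ List.prefix_append _ _)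
    simp [hwv] at this
  · exact hvb

theorem isTerminal_patricia_contract_iff {s : Finset (List Bool)} (hs : PrefixClosed ↑s)
    {v : List Bool} (hv : v ∈ keptVertices s) :
    IsTerminal (patricia s) (contract s v) ↔ IsTerminal s v := by
  obtain ⟨hvs, hvt | hvb⟩ := mem_keptVertices.mp hv
  · refine ⟨fun _ => hvt, fun _ y hy hvy => ?_⟩
    obtain ⟨w, hw, rfl⟩ := Finset.mem_image.mp hy
    exact contract_eq_of_isTerminal hs hvs hvt (mem_keptVertices.mp hw).1 hvy
  · have hnt : ¬ IsTerminal s v := fun hvt => by simpa using hvt _ hvb.2 (List.prefix_append _ _)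
    refine iff_of_false (fun h => ?_) hnt
    simpa using h _ (concat_mem_patricia hs hvb true) (List.prefix_append _ _)

theorem card_filter_patricia {s : Finset (List Bool)} (hs : PrefixClosed ↑s)
    {P Q : List Bool → Prop} [DecidablePred P] [DecidablePred Q]
    (hPQ : ∀ v ∈ keptVertices s, P (contract s v) ↔ Q v)
    (hQ : ∀ v ∈ s, Q v → v ∈ keptVertices s) :
    ((patricia s).filter P).card = (s.filter Q).card := by
  rw [patricia_eq_image_keptVertices, Finset.filter_image,
    Finset.card_image_of_injOn ((contract_injOn_keptVertices hs).mono (Finset.filter_subset _ _))]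
  congr 1
  ext v
  simp only [Finset.mem_filter]
  constructor
  · rintro ⟨hv, hP⟩
    exact ⟨(mem_keptVertices.mp hv).1, (hPQ v hv).mp hP⟩
  · rintro ⟨hv, hQv⟩
    exact ⟨hQ v hv hQv, (hPQ v (hQ v hv hQv)).mpr hQv⟩

/-- The PATRICIA contraction of a radix sort tree has the same number of out-degree-2
vertices and the same number of leaves as the original tree. -/
theorem patricia_preserves_counts (s : Finset (List Bool)) (h : RadixTree s) :
    branchCount (patricia s) = branchCount s ∧
      leafCount (patricia s) = leafCount s := by
  obtain ⟨-, hs, -⟩ := h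
  exact ⟨card_filter_patricia hs (fun v hv => isBranchVertex_patricia_contract_iff hs hv)
      fun v hv hb => mem_keptVertices.mpr ⟨hv, .inr hb⟩,
    card_filter_patricia hs (fun v hv => isTerminal_patricia_contract_iff hs hv)
      fun v hv ht => mem_keptVertices.mpr ⟨hv, .inl ht⟩⟩
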